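/- arXiv:1303.6933 — 4 statements merged into one kernel-verified Lean document; each statement's English description precedes it below -/
import Mathlib

section
/- Let n ≥ 2 and let B = {z ∈ ℂⁿ : ‖z‖ < 1} be the open unit ball. Then every function f : ℂⁿ → ℂ analytic on B ∖ {0} extends to a function g : ℂⁿ → ℂ analytic on B with g = f on B ∖ {0}. -/
/-!
Fix a point `z₀` close to the puncture `c`. On every complex line through `z₀` that misses `c`,
`f` is holomorphic on a disc of a fixed radius `ρ`, so Cauchy's estimates bound the diagonal
values `Dᵏf(z₀)(v, …, v)` by `k! M (‖v‖ / ρ)ᵏ`, where `M` bounds `‖f‖` on the sphere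
`‖z - z₀‖ = ρ`. In dimension at least two the directions of these lines are dense, so the bound
holds for every `v`.
Polarization turns it into a bound on the norm of the symmetric multilinear map `Dᵏf(z₀)`, hence
the Taylor series of `f` at `z₀` converges on a ball of radius `ρ / 6`, which contains `c`. Its
sum agrees with `f` near `z₀`, hence, by the identity theorem, on a punctured ball around `c`,
which is connected in dimension at least two.
-/

section Polarization

open Finset

theorem Finset.sum_superset_neg_one_pow_card_compl {α : Type*} [Fintype α] [DecidableEq α]
    (A : Finset α) :
    ∑ S : Finset α with A ⊆ S, (-1 : ℤ) ^ #Sᶜ = if A = univ then 1 else 0 := by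
  calc ∑ S : Finset α with A ⊆ S, (-1 : ℤ) ^ #Sᶜ = ∑ T ∈ Aᶜ.powerset, (-1 : ℤ) ^ #T := by
        rw [← filter_subset_univ]
        exact sum_nbij' compl compl (by simp [subset_compl_comm]) (by simp [subset_compl_comm])
          (fun S _ => compl_compl S) (fun S _ => compl_compl S) fun _ _ => rfl
    _ = _ := by simp [sum_powerset_neg_one_pow_card]

theorem MultilinearMap.polarization {R ι M N : Type*} [CommSemiring R] [Fintype ι]
    [DecidableEq ι] [AddCommMonoid M] [Module R M] [AddCommGroup N] [Module R N]
    (f : MultilinearMap R (fun _ : ι => M) N) (v : ι → M) :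
    ∑ S : Finset ι, (-1 : ℤ) ^ #Sᶜ • f (fun _ => ∑ j ∈ S, v j) =
      ∑ σ : Equiv.Perm ι, f (v ∘ σ) := by
  have expand (S : Finset ι) : f (fun _ => ∑ j ∈ S, v j) =
      ∑ r : ι → ι, if univ.image r ⊆ S then f (v ∘ r) else 0 := by
    rw [f.map_sum_finset, ← sum_filter]
    refine sum_congr ?_ fun _ _ => rfl
    ext r
    simp [image_subset_iff]
  calc ∑ S : Finset ι, (-1 : ℤ) ^ #Sᶜ • f (fun _ => ∑ j ∈ S, v j)
      = ∑ r : ι → ι, (∑ S : Finset ι with univ.image r ⊆ S, (-1 : ℤ) ^ #Sᶜ) • f (v ∘ r) := by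
        simp_rw [expand, smul_sum, sum_smul, sum_filter]
        rw [sum_comm]
        refine sum_congr rfl fun r _ => sum_congr rfl fun S _ => ?_
        split_ifs <;> simp
    _ = ∑ r : ι → ι with Function.Surjective r, f (v ∘ r) := by
        rw [sum_filter]
        refine sum_congr rfl fun r _ => ?_
        rw [sum_superset_neg_one_pow_card_compl]
        by_cases hr : Function.Surjective r
        · simp [hr, image_univ_of_surjective]
        · rw [if_neg, if_neg hr, zero_smul]
          contrapose! hr
          simpa [eq_univ_iff_forall, Function.Surjective] using hr
    _ = ∑ σ : Equiv.Perm ι, f (v ∘ σ) := by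
        symm
        refine sum_bij (fun σ _ => σ) (fun σ _ => by simpa using σ.surjective)
          (fun σ _ τ _ h => Equiv.ext (congrFun h)) (fun r hr => ?_) fun _ _ => rfl
        have hr : Function.Surjective r := by simpa using hr
        exact ⟨Equiv.ofBijective r ⟨Finite.injective_iff_surjective.2 hr, hr⟩, mem_univ _, rfl⟩

namespace ContinuousMultilinearMap

variable {𝕜 : Type*} [RCLike 𝕜] {G : Type*} [NormedAddCommGroup G] [NormedSpace 𝕜 G]

theorem opNorm_le_of_unit_norm {ι : Type*} [Fintype ι] {E : ι → Type*}
    [∀ i, NormedAddCommGroup (E i)] [∀ i, NormedSpace 𝕜 (E i)]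
    (f : ContinuousMultilinearMap 𝕜 E G) {C : ℝ} (hC : 0 ≤ C)
    (h : ∀ m : ∀ i, E i, (∀ i, ‖m i‖ = 1) → ‖f m‖ ≤ C) : ‖f‖ ≤ C := by
  refine f.opNorm_le_bound hC fun m => ?_
  by_cases hm : ∃ i, m i = 0
  · obtain ⟨i, hi⟩ := hm
    rw [f.map_coord_zero i hi, norm_zero]
    positivity
  push Not at hm
  set u : ∀ i, E i := fun i => (‖m i‖ : 𝕜)⁻¹ • m i
  have hu (i : ι) : ‖u i‖ = 1 := by
    simp [u, norm_smul, inv_mul_cancel₀ (norm_ne_zero_iff.2 (hm i))]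
  have hmu : f m = (∏ i, (‖m i‖ : 𝕜)) • f u := by
    rw [← f.map_smul_univ]
    congr 1
    ext i
    simp [u, smul_smul, hm i]
  rw [hmu, norm_smul, mul_comm C]
  simp only [norm_prod, RCLike.norm_ofReal, abs_norm]
  exact mul_le_mul_of_nonneg_left (h u hu) (by positivity)

theorem norm_le_of_norm_apply_diag_le {E : Type*} [NormedAddCommGroup E] [NormedSpace 𝕜 E]
    {k : ℕ} (D : ContinuousMultilinearMap 𝕜 (fun _ : Fin k => E) G)
    (hD : ∀ (v : Fin k → E) (σ : Equiv.Perm (Fin k)), D (v ∘ σ) = D v) {C : ℝ} (hC : 0 ≤ C)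
    (hdiag : ∀ u, ‖D (fun _ => u)‖ ≤ C * ‖u‖ ^ k) :
    ‖D‖ ≤ C * (2 * k) ^ k / k.factorial := by
  refine D.opNorm_le_of_unit_norm (by positivity) fun v hv => ?_
  have hsum (S : Finset (Fin k)) : ‖∑ j ∈ S, v j‖ ≤ k := by
    calc ‖∑ j ∈ S, v j‖ ≤ ∑ j ∈ S, ‖v j‖ := norm_sum_le _ _
      _ = #S := by simp [hv]
      _ ≤ k := by exact_mod_cast card_le_univ S |>.trans_eq (Fintype.card_fin k)
  have hpolar : (k.factorial : 𝕜) • D v =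
      ∑ S : Finset (Fin k), (-1 : ℤ) ^ #Sᶜ • D (fun _ => ∑ j ∈ S, v j) := by
    have hpol := D.toMultilinearMap.polarization v
    simp only [coe_coe] at hpol
    simp [hpol, hD, Fintype.card_perm, Nat.cast_smul_eq_nsmul]
  have hfactorial : (k.factorial : ℝ) * ‖D v‖ ≤ C * (2 * k) ^ k := by
    calc (k.factorial : ℝ) * ‖D v‖ = ‖(k.factorial : 𝕜) • D v‖ := by
          rw [norm_smul, RCLike.norm_natCast]
      _ ≤ ∑ S : Finset (Fin k), ‖D (fun _ => ∑ j ∈ S, v j)‖ := by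
          rw [hpolar]
          refine (norm_sum_le _ _).trans (sum_le_sum fun S _ => ?_)
          rw [norm_zsmul 𝕜]
          simp
      _ ≤ ∑ _S : Finset (Fin k), C * (k : ℝ) ^ k := by
          gcongr with S
          exact (hdiag _).trans (by gcongr; exact hsum S)
      _ = C * (2 * k) ^ k := by
          rw [sum_const, card_univ, Fintype.card_finset, Fintype.card_fin, nsmul_eq_mul]
          push_cast
          ring
  rw [le_div_iff₀ (by positivity)]
  linarith

end ContinuousMultilinearMap

end Polarization

open Metric Set Filter Topology

section NontriviallyNormedField

variable {𝕜 E F : Type*} [NontriviallyNormedField 𝕜] [NormedAddCommGroup E] [NormedSpace 𝕜 E]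
  [NormedAddCommGroup F] [NormedSpace 𝕜 F]

theorem dense_compl_span_singleton (hE : 1 < Module.rank 𝕜 E) (a : E) :
    Dense ((𝕜 ∙ a : Submodule 𝕜 E) : Set E)ᶜ := by
  rw [← interior_eq_empty_iff_dense_compl, ← not_nonempty_iff_eq_empty]
  intro h
  have hrank : Module.rank 𝕜 E ≤ 1 := by
    rw [← rank_top, ← (𝕜 ∙ a).eq_top_of_nonempty_interior' h]
    simpa using rank_span_le (R := 𝕜) ({a} : Set E)
  exact hE.not_ge hrank

theorem AnalyticAt.iteratedDeriv_comp_add_smul [CompleteSpace F] {f : E → F} {x : E}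
    (hf : AnalyticAt 𝕜 f x) (v : E) (k : ℕ) :
    iteratedDeriv k (fun t : 𝕜 => f (x + t • v)) 0 = iteratedFDeriv 𝕜 k f x (fun _ => v) := by
  obtain ⟨p, r, hp⟩ := hf
  set L : 𝕜 →L[𝕜] E := ContinuousLinearMap.toSpanSingleton 𝕜 v
  have hshift : HasFPowerSeriesOnBall (fun y => f (x + y)) p (L 0) r :=
    ⟨hp.r_le, hp.r_pos, fun hy => by simpa using hp.hasSum hy⟩
  have hline : HasFPowerSeriesOnBall (fun t : 𝕜 => f (x + t • v)) (p.compContinuousLinearMap L)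
      0 (r / ‖L‖ₑ) := hshift.compContinuousLinearMap
  rw [iteratedDeriv_eq_iteratedFDeriv, ← hp.factorial_smul, ← hline.factorial_smul,
    FormalMultilinearSeries.compContinuousLinearMap_apply]
  simp [L, Function.comp_def]

variable (𝕜) in
noncomputable def taylorSeries (f : E → F) (x : E) : FormalMultilinearSeries 𝕜 E F :=
  fun k => (k.factorial : 𝕜)⁻¹ • iteratedFDeriv 𝕜 k f x

theorem AnalyticAt.eventually_eq_taylorSeries_sum [CharZero 𝕜] [CompleteSpace F] {f : E → F}
    {x : E} (hf : AnalyticAt 𝕜 f x) :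
    ∀ᶠ z in 𝓝 x, f z = (taylorSeries 𝕜 f x).sum (z - x) := by
  obtain ⟨p, r, hp⟩ := hf
  filter_upwards [eball_mem_nhds x hp.r_pos] with z hz
  have hsum := hp.hasSum_iteratedFDeriv (y := z - x) (by
    rwa [mem_eball, edist_zero_right, ← edist_eq_enorm_sub])
  rw [add_sub_cancel] at hsum
  exact hsum.tsum_eq.symm

end NontriviallyNormedField

theorem isPreconnected_punctured_ball {V : Type*} [NormedAddCommGroup V] [NormedSpace ℝ V]
    (hV : 1 < Module.rank ℝ V) (c : V) (r : ℝ) : IsPreconnected (ball c r \ {c}) := by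
  have hpolar : ball c r \ {c} =
      (fun p : V × ℝ => c + p.2 • p.1) '' (sphere (0 : V) 1 ×ˢ Ioo 0 r) := by
    ext z
    constructor
    · rintro ⟨hz, hzc⟩
      have hpos : 0 < ‖z - c‖ := norm_pos_iff.2 (sub_ne_zero.2 hzc)
      refine ⟨(‖z - c‖⁻¹ • (z - c), ‖z - c‖), ⟨?_, hpos, ?_⟩, ?_⟩
      · simp [norm_smul, hpos.ne']
      · rwa [← dist_eq_norm]
      · simp [smul_smul, hpos.ne']
    · rintro ⟨⟨x, t⟩, ⟨hx, ht, htr⟩, rfl⟩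
      rw [mem_sphere_zero_iff_norm] at hx
      have hnorm : ‖t • x‖ = t := by rw [norm_smul, hx, mul_one, Real.norm_of_nonneg ht.le]
      refine ⟨by rwa [mem_ball, dist_eq_norm, add_sub_cancel_left, hnorm], fun h => ?_⟩
      rw [mem_singleton_iff, add_eq_left] at h
      rw [h, norm_zero] at hnorm
      exact ht.ne hnorm
  rw [hpolar]
  exact ((isPreconnected_sphere hV 0 1).prod isPreconnected_Ioo).image _ (by fun_prop)

theorem two_mul_pow_div_factorial_le_six_pow (k : ℕ) :
    (2 * k : ℝ) ^ k / k.factorial ≤ 6 ^ k := by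
  have hexp : Real.exp k ≤ 3 ^ k := by
    rw [← Real.exp_one_pow]
    exact pow_le_pow_left₀ (Real.exp_pos 1).le (Real.exp_one_lt_d9.le.trans (by norm_num)) k
  calc (2 * k : ℝ) ^ k / k.factorial = 2 ^ k * ((k : ℝ) ^ k / k.factorial) := by
        rw [mul_pow, mul_div_assoc]
    _ ≤ 2 ^ k * 3 ^ k := by
        gcongr
        exact (Real.pow_div_factorial_le_exp _ (Nat.cast_nonneg k) k).trans hexp
    _ = 6 ^ k := by rw [← mul_pow]; norm_num

section Complex

variable {E F : Type*} [NormedAddCommGroup E] [NormedSpace ℂ E]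
  [NormedAddCommGroup F] [NormedSpace ℂ F] [CompleteSpace F]

theorem norm_iteratedFDeriv_apply_diag_le_of_punctured (hE : 1 < Module.rank ℂ E)
    {f : E → F} {c z₀ : E} (hz₀ : z₀ ≠ c) {ρ M : ℝ} (hρ : 0 < ρ)
    (hf : AnalyticOnNhd ℂ f (closedBall z₀ ρ \ {c})) (hM : ∀ z ∈ sphere z₀ ρ, ‖f z‖ ≤ M)
    (k : ℕ) (v : E) :
    ‖iteratedFDeriv ℂ k f z₀ (fun _ => v)‖ ≤ k.factorial * M * (‖v‖ / ρ) ^ k := by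
  refine (dense_compl_span_singleton hE (c - z₀)).induction (fun v hv => ?_)
    (isClosed_le (by fun_prop) (by fun_prop)) v
  have hv0 : v ≠ 0 := fun h => hv (h ▸ Submodule.zero_mem _)
  have hline (t : ℂ) : z₀ + t • v ≠ c := by
    intro h
    refine hv (Submodule.mem_span_singleton.2 ⟨t⁻¹, ?_⟩)
    have ht : t ≠ 0 := by rintro rfl; simp [hz₀] at h
    rw [← h, add_sub_cancel_left, smul_smul, inv_mul_cancel₀ ht, one_smul]
  have hr : 0 < ρ / ‖v‖ := div_pos hρ (norm_pos_iff.2 hv0)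
  have hdist (t : ℂ) : dist (z₀ + t • v) z₀ = ‖t‖ * ‖v‖ := by
    rw [dist_eq_norm, add_sub_cancel_left, norm_smul]
  have hdiff : DiffContOnCl ℂ (fun t : ℂ => f (z₀ + t • v)) (ball 0 (ρ / ‖v‖)) := by
    refine DifferentiableOn.diffContOnCl fun t ht => ?_
    rw [closure_ball _ hr.ne', mem_closedBall_zero_iff, le_div_iff₀ (norm_pos_iff.2 hv0)] at ht
    have hmem : z₀ + t • v ∈ closedBall z₀ ρ \ {c} :=
      ⟨by rw [mem_closedBall, hdist]; exact ht, hline t⟩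
    have hslice : AnalyticAt ℂ (fun t : ℂ => f (z₀ + t • v)) t :=
      AnalyticAt.comp (g := f) (f := fun s : ℂ => z₀ + s • v) (hf _ hmem) (by fun_prop)
    exact hslice.differentiableAt.differentiableWithinAt
  have hsphere (t : ℂ) (ht : t ∈ sphere 0 (ρ / ‖v‖)) : ‖f (z₀ + t • v)‖ ≤ M := by
    rw [mem_sphere_zero_iff_norm, eq_div_iff (norm_ne_zero_iff.2 hv0)] at ht
    exact hM _ (by rw [mem_sphere, hdist, ht])
  rw [← (hf z₀ ⟨mem_closedBall_self hρ.le, hz₀⟩).iteratedDeriv_comp_add_smul]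
  refine (Complex.norm_iteratedDeriv_le_of_forall_mem_sphere_norm_le k hr hdiff hsphere).trans_eq ?_
  rw [div_eq_mul_inv, ← inv_pow, inv_div]

theorem le_radius_taylorSeries_of_punctured (hE : 1 < Module.rank ℂ E)
    {f : E → F} {c z₀ : E} (hz₀ : z₀ ≠ c) {ρ M : ℝ} (hρ : 0 < ρ)
    (hf : AnalyticOnNhd ℂ f (closedBall z₀ ρ \ {c})) (hM : ∀ z ∈ sphere z₀ ρ, ‖f z‖ ≤ M) :
    ENNReal.ofReal (ρ / 6) ≤ (taylorSeries ℂ f z₀).radius := by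
  have : Nontrivial E := rank_pos_iff_nontrivial.1 (zero_lt_one.trans hE)
  obtain ⟨z, hz⟩ := (NormedSpace.sphere_nonempty (x := z₀)).2 hρ.le
  have hM0 : 0 ≤ M := (norm_nonneg _).trans (hM z hz)
  refine (taylorSeries ℂ f z₀).le_radius_of_bound M fun k => ?_
  have hD : ‖iteratedFDeriv ℂ k f z₀‖ ≤ k.factorial * M / ρ ^ k * (2 * k) ^ k / k.factorial := by
    refine ContinuousMultilinearMap.norm_le_of_norm_apply_diag_le _
      (hf z₀ ⟨mem_closedBall_self hρ.le, hz₀⟩).contDiffAt.iteratedFDeriv_comp_perm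
      (by positivity) fun u => ?_
    refine (norm_iteratedFDeriv_apply_diag_le_of_punctured hE hz₀ hρ hf hM k u).trans_eq ?_
    ring
  calc ‖taylorSeries ℂ f z₀ k‖ * (ρ / 6).toNNReal ^ k
      = (k.factorial : ℝ)⁻¹ * ‖iteratedFDeriv ℂ k f z₀‖ * (ρ / 6) ^ k := by
        simp [taylorSeries, norm_smul, Real.coe_toNNReal _ (by positivity : 0 ≤ ρ / 6)]
    _ ≤ (k.factorial : ℝ)⁻¹ * (k.factorial * M / ρ ^ k * (2 * k) ^ k / k.factorial) *
          (ρ / 6) ^ k := by gcongr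
    _ = M * ((2 * k : ℝ) ^ k / k.factorial / 6 ^ k) := by
        field_simp
        rw [mul_assoc, ← mul_pow, div_mul_cancel₀ _ (by norm_num)]
    _ ≤ M := by
        refine mul_le_of_le_one_right hM0 ?_
        rw [div_le_one (by positivity)]
        exact two_mul_pow_div_factorial_le_six_pow k

variable [FiniteDimensional ℂ E]

theorem analyticOnNhd_taylorSeries_sum_of_punctured (hE : 2 ≤ Module.finrank ℂ E)
    {f : E → F} {c z₀ : E} (hz₀ : z₀ ≠ c) {ρ : ℝ} (hcρ : dist z₀ c < ρ)
    (hf : AnalyticOnNhd ℂ f (closedBall z₀ ρ \ {c})) :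
    AnalyticOnNhd ℂ (fun z => (taylorSeries ℂ f z₀).sum (z - z₀)) (ball z₀ (ρ / 6)) := by
  have hρ : 0 < ρ := dist_nonneg.trans_lt hcρ
  have hsphere : sphere z₀ ρ ⊆ closedBall z₀ ρ \ {c} := fun z hz =>
    ⟨sphere_subset_closedBall hz, by rintro rfl; rw [mem_sphere, dist_comm] at hz; linarith⟩
  obtain ⟨M, hM⟩ := (isCompact_sphere z₀ ρ).exists_bound_of_continuousOn
    (hf.continuousOn.mono hsphere)
  set q := taylorSeries ℂ f z₀
  have hq : ENNReal.ofReal (ρ / 6) ≤ q.radius := le_radius_taylorSeries_of_punctured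
    (Module.one_lt_rank_of_one_lt_finrank hE) hz₀ hρ hf hM
  have hqpos : 0 < q.radius := lt_of_lt_of_le (by simpa using hρ) hq
  refine fun z hz => ((q.hasFPowerSeriesOnBall hqpos).comp_sub z₀).analyticAt_of_mem ?_
  rw [zero_add, mem_eball, edist_dist]
  exact ((ENNReal.ofReal_lt_ofReal_iff (by positivity)).2 hz).trans_le hq

theorem AnalyticOnNhd.exists_analyticAt_eventuallyEq_of_punctured_ball
    (hE : 2 ≤ Module.finrank ℂ E) {f : E → F} {c : E} {R : ℝ} (hR : 0 < R)
    (hf : AnalyticOnNhd ℂ f (ball c R \ {c})) :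
    ∃ G : E → F, AnalyticAt ℂ G c ∧ f =ᶠ[𝓝[≠] c] G := by
  have : Nontrivial E := Module.nontrivial_of_finrank_pos (R := ℂ) (by omega)
  have hrankℝ : 1 < Module.rank ℝ E := by
    apply Module.one_lt_rank_of_one_lt_finrank
    rw [finrank_real_of_complex]
    omega
  -- The Taylor series at `z₀` converges on `ball z₀ (R / 12)`, which contains `ball c (R / 20)`.
  obtain ⟨w, hw⟩ := exists_norm_eq E (by positivity : 0 ≤ R / 100)
  set z₀ := c + w
  have hdist : dist z₀ c = R / 100 := by rw [dist_eq_norm, add_sub_cancel_left, hw]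
  have hz₀c : z₀ ≠ c := fun h => by rw [h, dist_self] at hdist; linarith
  have hsub : closedBall z₀ (R / 2) \ {c} ⊆ ball c R \ {c} := by
    refine sdiff_subset_sdiff_left fun z hz => ?_
    rw [mem_closedBall] at hz
    rw [mem_ball]
    linarith [dist_triangle z z₀ c]
  have hG := analyticOnNhd_taylorSeries_sum_of_punctured hE hz₀c (by rw [hdist]; linarith)
    (hf.mono hsub)
  set U := ball c (R / 20) \ {c}
  have hU : U ⊆ ball c R \ {c} ∩ ball z₀ (R / 2 / 6) := by
    rintro z ⟨hz, hzc⟩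
    rw [mem_ball] at hz
    refine ⟨⟨by rw [mem_ball]; linarith, hzc⟩, ?_⟩
    rw [mem_ball]
    linarith [dist_triangle z c z₀, dist_comm z₀ c]
  have hz₀U : z₀ ∈ U := ⟨by rw [mem_ball, hdist]; linarith, hz₀c⟩
  have hfG := (hf.mono fun z hz => (hU hz).1).eqOn_of_preconnected_of_eventuallyEq
    (hG.mono fun z hz => (hU hz).2) (isPreconnected_punctured_ball hrankℝ c _) hz₀U
    (hf z₀ (hU hz₀U).1).eventually_eq_taylorSeries_sum
  refine ⟨_, hG c (by rw [mem_ball, dist_comm, hdist]; linarith), ?_⟩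
  filter_upwards [sdiff_mem_nhdsWithin_compl (ball_mem_nhds c (by positivity : 0 < R / 20)) {c}]
    with z hz using hfG hz

theorem AnalyticOnNhd.exists_analyticOnNhd_eqOn_of_punctured (hE : 2 ≤ Module.finrank ℂ E)
    {f : E → F} {U : Set E} (hU : IsOpen U) {c : E} (hf : AnalyticOnNhd ℂ f (U \ {c})) :
    ∃ g : E → F, AnalyticOnNhd ℂ g U ∧ EqOn g f (U \ {c}) := by
  classical
  by_cases hc : c ∈ U
  swap
  · exact ⟨f, by rwa [sdiff_singleton_eq_self hc] at hf, eqOn_refl f _⟩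
  obtain ⟨R, hR, hRU⟩ := Metric.isOpen_iff.1 hU c hc
  obtain ⟨G, hG, hfG⟩ :=
    (hf.mono (sdiff_subset_sdiff_left hRU)).exists_analyticAt_eventuallyEq_of_punctured_ball hE hR
  refine ⟨Function.update f c (G c), fun z hz => ?_, fun z hz => Function.update_of_ne hz.2 _ _⟩
  rcases eq_or_ne z c with rfl | hzc
  · refine hG.congr ?_
    rw [← nhdsNE_sup_pure, EventuallyEq, eventually_sup, eventually_pure, Function.update_self]
    exact ⟨hfG.symm.trans ((Function.update_eventuallyEq f z (G z)).filter_mono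
      inf_le_right).symm, rfl⟩
  · refine (hf z ⟨hz, hzc⟩).congr ?_
    filter_upwards [isOpen_ne.mem_nhds hzc] with w hw using (Function.update_of_ne hw _ _).symm

end Complex

/-- **Extension across an isolated point in dimension ≥ 2.** For `n ≥ 2`, every
function holomorphic on the punctured open unit ball `B \ {0}` of `ℂⁿ` extends
holomorphically to the whole ball `B`. -/
theorem extension_across_point {n : ℕ} (hn : 2 ≤ n)
    (f : EuclideanSpace ℂ (Fin n) → ℂ)
    (hf : AnalyticOn ℂ f (Metric.ball (0 : EuclideanSpace ℂ (Fin n)) 1 \ {0})) :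
    ∃ g : EuclideanSpace ℂ (Fin n) → ℂ,
      AnalyticOn ℂ g (Metric.ball (0 : EuclideanSpace ℂ (Fin n)) 1) ∧
      Set.EqOn g f (Metric.ball (0 : EuclideanSpace ℂ (Fin n)) 1 \ {0}) := by
  have hopen : IsOpen (ball (0 : EuclideanSpace ℂ (Fin n)) 1 \ {0}) :=
    isOpen_ball.sdiff isClosed_singleton
  obtain ⟨g, hg, hgf⟩ :=
    (hopen.analyticOn_iff_analyticOnNhd.1 hf).exists_analyticOnNhd_eqOn_of_punctured
      (by rwa [finrank_euclideanSpace_fin]) isOpen_ball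
  exact ⟨g, hg.analyticOn, hgf⟩
end

section
/- Let n ≥ 1, s ≥ 1, and let f : ℂⁿ → ℂ be analytic on an open set containing the closed unit polydisk P = {z ∈ ℂⁿ : |zᵢ| ≤ 1 for all i}. Suppose f vanishes to order at least s at 0, i.e., the iterated derivatives of f at 0 of all orders k < s vanish. Then for every z ∈ P one has |f(z)| ≤ (maxᵢ |zᵢ|)^s · sup_{w ∈ P} |f(w)|. -/
/-!
The closed unit polydisk is the closed unit ball of `Fin n → ℂ` for the sup norm, so it suffices
to treat the unit ball of any complex normed space. On the complex line through `z`, the function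
`g t = f (t • z / ‖z‖)` vanishes to order `s` at `0`, hence `g t = t ^ s * h t` where `h` is the
`s`-fold iterated `dslope` of `g` at `0`. The function `h` is again holomorphic on the unit disc,
and on the unit circle `|h| = |g|`, so the maximum modulus principle bounds `|h|` by the supremum
of `|f|`; evaluating at `t = ‖z‖` gives the estimate.
-/

open Function Metric Set Nat

section IterateDSlope

variable {𝕜 : Type*} [NontriviallyNormedField 𝕜] [CompleteSpace 𝕜] [CharZero 𝕜] {f : 𝕜 → 𝕜}
  {a : 𝕜}

theorem AnalyticAt.iterate_dslope_self (hf : AnalyticAt 𝕜 f a) (k : ℕ) :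
    (swap dslope a)^[k] f a = iteratedDeriv k f a / k ! := by
  rw [← (hf.hasFPowerSeriesAt.has_fpower_series_iterate_dslope_fslope k).coeff_zero 1,
    ← FormalMultilinearSeries.coeff, FormalMultilinearSeries.coeff_iterate_fslope, zero_add,
    FormalMultilinearSeries.coeff_ofScalars]

theorem AnalyticAt.pow_sub_mul_iterate_dslope (hf : AnalyticAt 𝕜 f a) {s : ℕ}
    (hv : ∀ k < s, iteratedDeriv k f a = 0) (b : 𝕜) :
    (b - a) ^ s * (swap dslope a)^[s] f b = f b :=
  pow_sub_smul_iterate_dslope_of_zero s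
    (fun k hk => by rw [hf.iterate_dslope_self, hv k hk, zero_div]) b

end IterateDSlope

section DiffContOnCl

variable {E : Type*} [NormedAddCommGroup E] [NormedSpace ℂ E] [CompleteSpace E] {f : ℂ → E}
  {s : Set ℂ} {a : ℂ}

theorem DiffContOnCl.dslope (hf : DiffContOnCl ℂ f s) (hs : IsOpen s) (ha : a ∈ s) :
    DiffContOnCl ℂ (dslope f a) s :=
  ⟨(Complex.differentiableOn_dslope (hs.mem_nhds ha)).2 hf.1,
    (continuousOn_dslope (Filter.mem_of_superset (hs.mem_nhds ha) subset_closure)).2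
      ⟨hf.2, hf.differentiableAt hs ha⟩⟩

theorem DiffContOnCl.iterate_dslope (hf : DiffContOnCl ℂ f s) (hs : IsOpen s) (ha : a ∈ s)
    (k : ℕ) : DiffContOnCl ℂ ((swap _root_.dslope a)^[k] f) s := by
  induction k with
  | zero => exact hf
  | succ k ih => rw [iterate_succ_apply']; exact ih.dslope hs ha

end DiffContOnCl

theorem Complex.norm_le_norm_pow_mul_of_iteratedDeriv_eq_zero {g : ℂ → ℂ} {s : ℕ} {M : ℝ}
    (hg : DiffContOnCl ℂ g (ball 0 1)) (hv : ∀ k < s, iteratedDeriv k g 0 = 0)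
    (hM : ∀ t ∈ sphere (0 : ℂ) 1, ‖g t‖ ≤ M) {t : ℂ} (ht : ‖t‖ ≤ 1) :
    ‖g t‖ ≤ ‖t‖ ^ s * M := by
  set h := (swap dslope 0)^[s] g
  have hnorm (t : ℂ) : ‖g t‖ = ‖t‖ ^ s * ‖h t‖ := by
    rw [← (hg.differentiableOn.analyticAt (ball_mem_nhds 0 one_pos)).pow_sub_mul_iterate_dslope
      hv t, sub_zero, norm_mul, norm_pow]
  have hh : DiffContOnCl ℂ h (ball 0 1) := hg.iterate_dslope isOpen_ball (mem_ball_self one_pos) s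
  have hbound : ‖h t‖ ≤ M := by
    refine Complex.norm_le_of_forall_mem_frontier_norm_le isBounded_ball hh (fun w hw => ?_) ?_
    · rw [frontier_ball 0 one_ne_zero] at hw
      simpa [hnorm, mem_sphere_zero_iff_norm.1 hw] using hM w hw
    · rwa [closure_ball 0 one_ne_zero, mem_closedBall_zero_iff]
  rw [hnorm]
  exact mul_le_mul_of_nonneg_left hbound (by positivity)

section IteratedFDerivComp

variable {𝕜 E F G : Type*} [NontriviallyNormedField 𝕜] [NormedAddCommGroup E] [NormedSpace 𝕜 E]
  [NormedAddCommGroup F] [NormedSpace 𝕜 F] [NormedAddCommGroup G] [NormedSpace 𝕜 G] {f : E → F}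
  {s : Set E} {n : WithTop ℕ∞}

theorem ContinuousLinearMap.iteratedFDeriv_comp_right_of_contDiffOn (g : G →L[𝕜] E)
    (hs : IsOpen s) (hf : ContDiffOn 𝕜 n f s) {x : G} (hx : g x ∈ s) {i : ℕ} (hi : i ≤ n) :
    iteratedFDeriv 𝕜 i (f ∘ g) x =
      (iteratedFDeriv 𝕜 i f (g x)).compContinuousLinearMap fun _ => g := by
  have hs' : IsOpen (g ⁻¹' s) := hs.preimage g.continuous
  rw [← iteratedFDerivWithin_of_isOpen i hs' hx, ← iteratedFDerivWithin_of_isOpen i hs hx]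
  exact g.iteratedFDerivWithin_comp_right hf hs.uniqueDiffOn hs'.uniqueDiffOn hx hi

theorem iteratedDeriv_comp_smul_const (hs : IsOpen s) (hf : ContDiffOn 𝕜 n f s) {u : E} {t : 𝕜}
    (ht : t • u ∈ s) {k : ℕ} (hk : k ≤ n) :
    iteratedDeriv k (fun t => f (t • u)) t = iteratedFDeriv 𝕜 k f (t • u) fun _ => u := by
  have := ((ContinuousLinearMap.id 𝕜 𝕜).smulRight u).iteratedFDeriv_comp_right_of_contDiffOn
    hs hf ht hk
  rw [iteratedDeriv_eq_iteratedFDeriv]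
  exact congr($this fun _ => 1).trans (by simp)

end IteratedFDerivComp

theorem norm_le_norm_pow_mul_of_iteratedFDeriv_eq_zero {E : Type*} [NormedAddCommGroup E]
    [NormedSpace ℂ E] {f : E → ℂ} {s : ℕ} {M : ℝ} (hf : AnalyticOn ℂ f (closedBall 0 1))
    (hv : ∀ k < s, iteratedFDeriv ℂ k f 0 = 0) (hM : ∀ w ∈ closedBall (0 : E) 1, ‖f w‖ ≤ M)
    {z : E} (hz : ‖z‖ ≤ 1) : ‖f z‖ ≤ ‖z‖ ^ s * M := by
  set u : E := (‖z‖ : ℂ)⁻¹ • z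
  have hu : ‖u‖ ≤ 1 := by
    rw [norm_smul, norm_inv, Complex.norm_real, norm_norm]
    exact inv_mul_le_one
  have hzu : (‖z‖ : ℂ) • u = z := by
    rcases eq_or_ne z 0 with rfl | hz0
    · simp
    · exact smul_inv_smul₀ (by simpa using hz0) z
  have hline : MapsTo (fun t : ℂ => t • u) (closedBall 0 1) (closedBall 0 1) := fun t ht => by
    rw [mem_closedBall_zero_iff] at ht ⊢
    rw [norm_smul]
    exact mul_le_one₀ ht (norm_nonneg _) hu
  have hg : DiffContOnCl ℂ (fun t : ℂ => f (t • u)) (ball 0 1) := by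
    refine DifferentiableOn.diffContOnCl ?_
    rw [closure_ball 0 one_ne_zero]
    exact hf.differentiableOn.comp (differentiable_id.smul_const u).differentiableOn hline
  have hv' (k : ℕ) (hk : k < s) : iteratedDeriv k (fun t : ℂ => f (t • u)) 0 = 0 := by
    rw [iteratedDeriv_comp_smul_const isOpen_ball
      ((hf.mono ball_subset_closedBall).contDiffOn isOpen_ball.uniqueDiffOn (n := ⊤))
      (by simp) le_top, zero_smul, hv k hk]
    rfl
  simpa [hzu] using Complex.norm_le_norm_pow_mul_of_iteratedDeriv_eq_zero hg hv'
    (fun t ht => hM _ (hline (sphere_subset_closedBall ht))) (t := ‖z‖) (by simpa using hz)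

theorem Pi.sup'_norm_eq_norm {ι : Type*} [Fintype ι] {E : ι → Type*}
    [∀ i, SeminormedAddCommGroup (E i)] (x : ∀ i, E i) (h : (Finset.univ : Finset ι).Nonempty) :
    Finset.univ.sup' h (fun i => ‖x i‖) = ‖x‖ := by
  obtain ⟨i, hi⟩ := h
  have hnonneg : 0 ≤ Finset.univ.sup' ⟨i, hi⟩ (fun i => ‖x i‖) :=
    (norm_nonneg _).trans (Finset.le_sup' (fun i => ‖x i‖) hi)
  exact le_antisymm (Finset.sup'_le _ _ fun j _ => norm_le_pi_norm x j)
    ((pi_norm_le_iff_of_nonneg hnonneg).2 fun j =>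
      Finset.le_sup' (fun i => ‖x i‖) (Finset.mem_univ j))

theorem schwarz_lemma_polydisk_general {n s : ℕ} (hn : 1 ≤ n)
    (f : (Fin n → ℂ) → ℂ) (V : Set (Fin n → ℂ))
    (hPV : {z : Fin n → ℂ | ∀ i, ‖z i‖ ≤ 1} ⊆ V)
    (hf : AnalyticOn ℂ f V)
    (hvanish : ∀ k < s, iteratedFDeriv ℂ k f 0 = 0) :
    ∀ z ∈ {z : Fin n → ℂ | ∀ i, ‖z i‖ ≤ 1},
      ‖f z‖ ≤
        (Finset.univ.sup' ⟨⟨0, hn⟩, Finset.mem_univ _⟩ fun i => ‖z i‖) ^ s *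
          sSup ((fun w => ‖f w‖) ''
            {w : Fin n → ℂ | ∀ i, ‖w i‖ ≤ 1}) := by
  have hP : {z : Fin n → ℂ | ∀ i, ‖z i‖ ≤ 1} = closedBall 0 1 := by
    ext z
    simp [pi_norm_le_iff_of_nonneg]
  rw [hP] at hPV ⊢
  intro z hz
  have hfP : AnalyticOn ℂ f (closedBall 0 1) := hf.mono hPV
  have hbdd : BddAbove ((fun w => ‖f w‖) '' closedBall 0 1) :=
    (isCompact_closedBall 0 1).bddAbove_image hfP.continuousOn.norm
  convert norm_le_norm_pow_mul_of_iteratedFDeriv_eq_zero hfP hvanish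
    (fun w hw => le_csSup hbdd (mem_image_of_mem _ hw)) (mem_closedBall_zero_iff.1 hz) using 3
  exact Pi.sup'_norm_eq_norm z _

/-- **Several-variable Schwarz lemma (Siegel's method).** Let `f` be holomorphic on
an open set containing the closed unit polydisk `P` of `ℂⁿ` (`n ≥ 1`), vanishing to
order at least `s ≥ 1` at the origin. Then
`|f z| ≤ (maxᵢ |zᵢ|)^s · sup_{w ∈ P} |f w|` for every `z ∈ P`. -/
theorem schwarz_lemma_polydisk {n s : ℕ} (hn : 1 ≤ n) (hs : 1 ≤ s)
    (f : (Fin n → ℂ) → ℂ) (V : Set (Fin n → ℂ)) (hV : IsOpen V)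
    (hPV : {z : Fin n → ℂ | ∀ i, ‖z i‖ ≤ 1} ⊆ V)
    (hf : AnalyticOn ℂ f V)
    (hvanish : ∀ k < s, iteratedFDeriv ℂ k f 0 = 0) :
    ∀ z ∈ {z : Fin n → ℂ | ∀ i, ‖z i‖ ≤ 1},
      ‖f z‖ ≤
        (Finset.univ.sup' ⟨⟨0, hn⟩, Finset.mem_univ _⟩ fun i => ‖z i‖) ^ s *
          sSup ((fun w => ‖f w‖) ''
            {w : Fin n → ℂ | ∀ i, ‖w i‖ ≤ 1}) :=
  schwarz_lemma_polydisk_general hn f V hPV hf hvanish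
end

section
/- Let Ω = {(z₁, z₂) ∈ ℂ² : |z₁| < 1, |z₂| < 1, and Re z₁ < |z₂|²}. Then there exists an open set V ⊆ ℂ² containing the origin such that every function f : ℂ² → ℂ analytic on Ω extends to a function g : ℂ² → ℂ analytic on Ω ∪ V with g = f on Ω. -/
/-!
For `z₁` in `D = {|z₁| < 1, Re z₁ < 1/2}` the circle `|z₂| = 3/4` lies in `Ω` (as `1/2 < (3/4)²`),
so the Cauchy coefficients `aₙ(z₁) = (2πi)⁻¹ ∮_{|w| = 3/4} f(z₁, w) w⁻ⁿ⁻¹ dw` are holomorphic on `D`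
and obey `|aₙ| ≤ M (4/3)ⁿ` locally uniformly; hence the Hartogs series `G(z₁, z₂) = ∑ aₙ(z₁) z₂ⁿ`
is holomorphic in `z₁` for each `|z₂| < 3/4`. Expanding every `aₙ` once more around `0` writes `G`
as a double power series with geometrically bounded coefficients, so `G` is analytic on a
neighbourhood of the origin in `ℂ²`. When `Re z₁ < 0` the whole disc `|z₂| ≤ 3/4` lies in `Ω`, so
`G = f` there by Cauchy's formula, and for fixed small `z₂` the identity theorem on the convex slice
`{z₁ | (z₁, z₂) ∈ Ω}` spreads this to the whole slice. Gluing `f` on `Ω` with `G` near `0` gives the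
extension.
-/

open Complex Metric Set Filter Topology Real MeasureTheory Finset
open scoped NNReal

section CauchyCoeff

variable {E : Type*} [NormedAddCommGroup E] [NormedSpace ℂ E]

theorem coeff_cauchyPowerSeries (φ : ℂ → E) (c : ℂ) (R : ℝ) (n : ℕ) :
    (cauchyPowerSeries φ c R).coeff n =
      (2 * π * I : ℂ)⁻¹ • ∮ w in C(c, R), (w - c)⁻¹ ^ n • (w - c)⁻¹ • φ w := by
  simp [FormalMultilinearSeries.coeff, cauchyPowerSeries]

theorem norm_coeff_cauchyPowerSeries_le {φ : ℂ → E} {c : ℂ} {R M : ℝ}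
    (hM : ∀ w ∈ sphere c |R|, ‖φ w‖ ≤ M) (n : ℕ) :
    ‖(cauchyPowerSeries φ c R).coeff n‖ ≤ M * |R|⁻¹ ^ n := by
  have hint : ∫ θ in (0 : ℝ)..2 * π, ‖φ (circleMap c R θ)‖ ≤ M * (2 * π) := by
    refine (le_abs_self _).trans ?_
    simpa [abs_of_pos Real.two_pi_pos] using
      intervalIntegral.norm_integral_le_of_norm_le_const (a := 0) (b := 2 * π)
        (f := fun θ => ‖φ (circleMap c R θ)‖)
        fun θ _ => by simpa using hM _ (circleMap_mem_sphere' c R θ)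
  rw [← FormalMultilinearSeries.norm_apply_eq_norm_coef]
  refine (norm_cauchyPowerSeries_le φ c R n).trans ?_
  gcongr
  calc (2 * π)⁻¹ * ∫ θ in (0 : ℝ)..2 * π, ‖φ (circleMap c R θ)‖
      ≤ (2 * π)⁻¹ * (M * (2 * π)) := by gcongr
    _ = M := by field_simp

variable [CompleteSpace E]

theorem hasSum_coeff_cauchyPowerSeries {φ : ℂ → E} {R : ℝ} (hR : 0 < R)
    (hφ : DifferentiableOn ℂ φ (closedBall 0 R)) {w : ℂ} (hw : ‖w‖ < R) :
    HasSum (fun n => w ^ n • (cauchyPowerSeries φ 0 R).coeff n) (φ w) := by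
  lift R to ℝ≥0 using hR.le
  have hw' : w ∈ eball (0 : ℂ) R := by
    rwa [eball_coe, mem_ball_zero_iff]
  simpa [FormalMultilinearSeries.apply_eq_pow_smul_coeff] using
    (hφ.hasFPowerSeriesOnBall (by exact_mod_cast hR)).hasSum hw'

theorem differentiableOn_circleIntegral_of_analyticOnNhd {U : Set ℂ} (hU : IsOpen U)
    {F : ℂ × ℂ → E} {c : ℂ} {R : ℝ} (hF : AnalyticOnNhd ℂ F (U ×ˢ sphere c |R|)) :
    DifferentiableOn ℂ (fun z => ∮ w in C(c, R), F (z, w)) U := by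
  intro z hz
  obtain ⟨ε, hε, hεU⟩ := nhds_basis_closedBall.mem_iff.mp (hU.mem_nhds hz)
  have hmem : ∀ x ∈ U, ∀ θ, (x, circleMap c R θ) ∈ U ×ˢ sphere c |R| :=
    fun x hx θ => ⟨hx, circleMap_mem_sphere' c R θ⟩
  set F₁ : ℂ × ℂ → E := fun p => fderiv ℂ F p (1, 0)
  have hF₁ : ContinuousOn F₁ (U ×ˢ sphere c |R|) := fun p hp =>
    ((hF p hp).fderiv.continuousAt.clm_apply continuousAt_const).continuousWithinAt
  have hK := (isCompact_closedBall z ε).prod (isCompact_sphere c |R|)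
  obtain ⟨C, hC⟩ := hK.exists_bound_of_continuousOn (hF₁.mono (prod_mono hεU subset_rfl))
  have hderiv : Continuous (deriv (circleMap c R)) := by
    rw [funext (deriv_circleMap c R)]; fun_prop
  have hcont : ∀ x ∈ U,
      Continuous fun θ => deriv (circleMap c R) θ • F (x, circleMap c R θ) :=
    fun x hx => hderiv.smul (hF.continuousOn.comp_continuous (by fun_prop) (hmem x hx))
  have hball : ball z ε ⊆ U := ball_subset_closedBall.trans hεU
  obtain ⟨-, hasDeriv⟩ := intervalIntegral.hasDerivAt_integral_of_dominated_loc_of_deriv_le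
    (μ := volume) (a := 0) (b := 2 * π)
    (F := fun x θ => deriv (circleMap c R) θ • F (x, circleMap c R θ))
    (F' := fun x θ => deriv (circleMap c R) θ • F₁ (x, circleMap c R θ))
    (bound := fun _ => |R| * C) (ball_mem_nhds z hε)
    (eventually_of_mem (ball_mem_nhds z hε) fun x hx =>
      (hcont x (hball hx)).aestronglyMeasurable)
    ((hcont z hz).intervalIntegrable _ _)
    (hderiv.smul (hF₁.comp_continuous (by fun_prop) (hmem z hz))).aestronglyMeasurable
    (ae_of_all _ fun θ _ x hx => by
      rw [norm_smul, deriv_circleMap, norm_mul, norm_circleMap_zero, norm_I, mul_one]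
      exact mul_le_mul_of_nonneg_left
        (hC _ ⟨ball_subset_closedBall hx, circleMap_mem_sphere' c R θ⟩) (abs_nonneg R))
    intervalIntegrable_const
    (ae_of_all _ fun θ _ x hx =>
      (((hF _ (hmem x (hball hx) θ)).differentiableAt.hasFDerivAt.comp_hasDerivAt x
        ((hasDerivAt_id x).prodMk (hasDerivAt_const x _))).const_smul _))
  exact hasDeriv.differentiableAt.differentiableWithinAt

end CauchyCoeff

theorem HasSum.sum_antidiagonal {α : Type*} [AddCommMonoid α] [TopologicalSpace α]
    [ContinuousAdd α] [RegularSpace α] {F : ℕ × ℕ → α} {a : α} (h : HasSum F a) :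
    HasSum (fun k => ∑ q ∈ antidiagonal k, F q) a :=
  (HasAntidiagonal.sigmaAntidiagonalEquivProd.hasSum_iff.mpr h).sigma fun k =>
    (Finset.sum_coe_sort (antidiagonal k) F) ▸ hasSum_fintype _

section DoubleSeries

variable {𝕜 : Type*} [NontriviallyNormedField 𝕜]

def prodMonomial (k m : ℕ) : ContinuousMultilinearMap 𝕜 (fun _ : Fin k => 𝕜 × 𝕜) 𝕜 :=
  (ContinuousMultilinearMap.mkPiAlgebra 𝕜 (Fin k) 𝕜).compContinuousLinearMap fun i =>
    if (i : ℕ) < m then ContinuousLinearMap.fst 𝕜 𝕜 𝕜 else ContinuousLinearMap.snd 𝕜 𝕜 𝕜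

theorem prodMonomial_apply (k m : ℕ) (v : Fin k → 𝕜 × 𝕜) :
    prodMonomial k m v = ∏ i : Fin k, if (i : ℕ) < m then (v i).1 else (v i).2 := by
  simp only [prodMonomial, ContinuousMultilinearMap.compContinuousLinearMap_apply,
    ContinuousMultilinearMap.mkPiAlgebra_apply]
  exact prod_congr rfl fun i _ => by split_ifs <;> rfl

theorem prodMonomial_apply_const {k m : ℕ} (hm : m ≤ k) (y : 𝕜 × 𝕜) :
    prodMonomial k m (fun _ => y) = y.1 ^ m * y.2 ^ (k - m) := by
  obtain ⟨n, rfl⟩ := Nat.exists_eq_add_of_le hm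
  rw [prodMonomial_apply, Fin.prod_univ_eq_prod_range (fun i => if i < m then y.1 else y.2),
    prod_range_add, Nat.add_sub_cancel_left,
    prod_congr rfl fun i hi => if_pos (mem_range.mp hi),
    prod_congr rfl fun i _ => if_neg (Nat.not_lt.mpr (Nat.le_add_right m i)),
    prod_const, prod_const, card_range, card_range]

theorem norm_prodMonomial_le (k m : ℕ) : ‖prodMonomial (𝕜 := 𝕜) k m‖ ≤ 1 := by
  refine ContinuousMultilinearMap.opNorm_le_bound zero_le_one fun v => ?_
  rw [prodMonomial_apply, one_mul, norm_prod]
  refine prod_le_prod (fun _ _ => norm_nonneg _) fun i _ => ?_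
  split_ifs
  exacts [norm_fst_le (v i), norm_snd_le (v i)]

def doubleSeries (c : ℕ × ℕ → 𝕜) : FormalMultilinearSeries 𝕜 (𝕜 × 𝕜) 𝕜 :=
  fun k => ∑ q ∈ antidiagonal k, c q • prodMonomial k q.1

noncomputable def doubleSum (c : ℕ × ℕ → 𝕜) (y : 𝕜 × 𝕜) : 𝕜 :=
  ∑' q : ℕ × ℕ, c q * y.1 ^ q.1 * y.2 ^ q.2

variable {c : ℕ × ℕ → 𝕜} {M : ℝ}

theorem doubleSeries_apply_const (c : ℕ × ℕ → 𝕜) (k : ℕ) (y : 𝕜 × 𝕜) :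
    doubleSeries c k (fun _ => y) = ∑ q ∈ antidiagonal k, c q * y.1 ^ q.1 * y.2 ^ q.2 := by
  rw [doubleSeries, _root_.sum_apply]
  refine sum_congr rfl fun q hq => ?_
  rw [HasAntidiagonal.mem_antidiagonal] at hq
  rw [smul_apply, prodMonomial_apply_const (hq ▸ le_self_add),
    smul_eq_mul, ← hq, Nat.add_sub_cancel_left, mul_assoc]

theorem norm_doubleSeries_mul_pow_le {s : ℝ} (hs : 0 ≤ s)
    (hc : ∀ q, ‖c q‖ * s ^ (q.1 + q.2) ≤ M) (k : ℕ) :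
    ‖doubleSeries c k‖ * s ^ k ≤ (k + 1) * M := by
  have hterm (q : ℕ × ℕ) : ‖c q • prodMonomial k q.1‖ ≤ ‖c q‖ :=
    (norm_smul_le _ _).trans
      (mul_le_of_le_one_right (norm_nonneg _) (norm_prodMonomial_le (𝕜 := 𝕜) k q.1))
  calc ‖doubleSeries c k‖ * s ^ k ≤ (∑ q ∈ antidiagonal k, ‖c q‖) * s ^ k := by
        gcongr
        exact (norm_sum_le _ _).trans (sum_le_sum fun q _ => hterm q)
    _ ≤ ∑ _q ∈ antidiagonal k, M := by
        rw [sum_mul]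
        exact sum_le_sum fun q hq => HasAntidiagonal.mem_antidiagonal.mp hq ▸ hc q
    _ = (k + 1) * M := by simp

theorem summable_doubleSum [CompleteSpace 𝕜] {s : ℝ} (hc : ∀ q, ‖c q‖ * s ^ (q.1 + q.2) ≤ M)
    {y : 𝕜 × 𝕜} (hy : ‖y‖ < s) : Summable fun q : ℕ × ℕ => c q * y.1 ^ q.1 * y.2 ^ q.2 := by
  have hs : 0 < s := (norm_nonneg y).trans_lt hy
  set t := ‖y‖ / s
  have ht : t < 1 := (div_lt_one hs).mpr hy
  have hgeom : Summable fun q : ℕ × ℕ => M * (t ^ q.1 * t ^ q.2) :=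
    ((summable_geometric_of_lt_one (by positivity) ht).mul_of_nonneg
      (summable_geometric_of_lt_one (by positivity) ht) (fun _ => by positivity)
      fun _ => by positivity).mul_left M
  refine hgeom.of_norm_bounded fun q => ?_
  have h1 : ‖y.1‖ ^ q.1 ≤ (t * s) ^ q.1 := by
    rw [div_mul_cancel₀ _ hs.ne']; gcongr; exact norm_fst_le y
  have h2 : ‖y.2‖ ^ q.2 ≤ (t * s) ^ q.2 := by
    rw [div_mul_cancel₀ _ hs.ne']; gcongr; exact norm_snd_le y
  calc ‖c q * y.1 ^ q.1 * y.2 ^ q.2‖ = ‖c q‖ * ‖y.1‖ ^ q.1 * ‖y.2‖ ^ q.2 := by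
        simp only [norm_mul, norm_pow]
    _ ≤ ‖c q‖ * (t * s) ^ q.1 * (t * s) ^ q.2 := by gcongr
    _ = ‖c q‖ * s ^ (q.1 + q.2) * (t ^ q.1 * t ^ q.2) := by ring
    _ ≤ M * (t ^ q.1 * t ^ q.2) := by gcongr; exact hc q

theorem hasFPowerSeriesOnBall_doubleSum [CompleteSpace 𝕜] {s : ℝ≥0} (hs : 0 < s)
    (hc : ∀ q, ‖c q‖ * s ^ (q.1 + q.2) ≤ M) :
    HasFPowerSeriesOnBall (doubleSum c) (doubleSeries c) 0 (s / 2 : ℝ≥0) where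
  r_le := by
    have hM : 0 ≤ M := (mul_nonneg (norm_nonneg _) (by positivity)).trans (hc 0)
    refine (doubleSeries c).le_radius_of_bound M fun k => ?_
    have hk : (k + 1 : ℝ) ≤ 2 ^ k := by exact_mod_cast Nat.lt_two_pow_self
    calc ‖doubleSeries c k‖ * ((s / 2 : ℝ≥0) : ℝ) ^ k = ‖doubleSeries c k‖ * s ^ k / 2 ^ k := by
          rw [NNReal.coe_div, div_pow, NNReal.coe_ofNat, mul_div_assoc]
      _ ≤ (k + 1) * M / 2 ^ k :=
          div_le_div_of_nonneg_right (norm_doubleSeries_mul_pow_le s.2 hc k) (by positivity)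
      _ ≤ M := by
          rw [div_le_iff₀ (by positivity), mul_comm M]
          exact mul_le_mul_of_nonneg_right hk hM
  r_pos := by simpa using hs.ne'
  hasSum {y} hy := by
    have hy' : ‖y‖ < s := by
      rw [eball_coe, mem_ball_zero_iff] at hy
      exact hy.trans (by push_cast; linarith [s.2])
    simpa only [zero_add, doubleSeries_apply_const, doubleSum] using
      (summable_doubleSum hc hy').hasSum.sum_antidiagonal

end DoubleSeries

section Hartogs

noncomputable def hartogsCoeff (f : ℂ × ℂ → ℂ) (r : ℝ) (n : ℕ) (z : ℂ) : ℂ :=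
  (cauchyPowerSeries (fun w => f (z, w)) 0 r).coeff n

noncomputable def hartogsSeries (f : ℂ × ℂ → ℂ) (r : ℝ) (p : ℂ × ℂ) : ℂ :=
  ∑' n, hartogsCoeff f r n p.1 * p.2 ^ n

variable {f : ℂ × ℂ → ℂ} {U : Set ℂ} {r : ℝ}

theorem differentiableOn_hartogsCoeff (hU : IsOpen U) (hr : 0 < r)
    (hf : AnalyticOnNhd ℂ f (U ×ˢ sphere 0 r)) (n : ℕ) :
    DifferentiableOn ℂ (hartogsCoeff f r n) U := by
  have hF : AnalyticOnNhd ℂ (fun p : ℂ × ℂ => p.2⁻¹ ^ n • p.2⁻¹ • f p) (U ×ˢ sphere 0 |r|) := by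
    rintro p ⟨hp₁, hp₂⟩
    rw [abs_of_pos hr] at hp₂
    have hinv : AnalyticAt ℂ (fun p : ℂ × ℂ => p.2⁻¹) p :=
      analyticAt_snd.inv (ne_zero_of_mem_sphere hr.ne' ⟨p.2, hp₂⟩)
    exact (hinv.pow n).smul (hinv.smul (hf p ⟨hp₁, hp₂⟩))
  unfold hartogsCoeff
  simp_rw [coeff_cauchyPowerSeries, sub_zero]
  exact (differentiableOn_circleIntegral_of_analyticOnNhd hU hF).const_smul (2 * π * I : ℂ)⁻¹

theorem exists_norm_hartogsCoeff_le {K : Set ℂ} (hK : IsCompact K) (hr : 0 ≤ r)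
    (hf : ContinuousOn f (K ×ˢ sphere 0 r)) :
    ∃ M, ∀ n, ∀ z ∈ K, ‖hartogsCoeff f r n z‖ ≤ M * r⁻¹ ^ n := by
  obtain ⟨M, hM⟩ := (hK.prod (isCompact_sphere 0 r)).exists_bound_of_continuousOn hf
  refine ⟨M, fun n z hz => ?_⟩
  have hM' : ∀ w ∈ sphere 0 |r|, ‖f (z, w)‖ ≤ M := fun w hw =>
    hM (z, w) ⟨hz, by rwa [abs_of_nonneg hr] at hw⟩
  simpa only [hartogsCoeff, abs_of_nonneg hr] using norm_coeff_cauchyPowerSeries_le hM' n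

theorem hasSum_hartogsCoeff (hr : 0 < r) {z w : ℂ}
    (hf : DifferentiableOn ℂ (fun w => f (z, w)) (closedBall 0 r)) (hw : ‖w‖ < r) :
    HasSum (fun n => hartogsCoeff f r n z * w ^ n) (f (z, w)) := by
  simpa only [hartogsCoeff, smul_eq_mul, mul_comm] using hasSum_coeff_cauchyPowerSeries hr hf hw

theorem differentiableOn_hartogsSeries_slice (hU : IsOpen U) (hr : 0 < r)
    (hf : AnalyticOnNhd ℂ f (U ×ˢ sphere 0 r)) {w : ℂ} (hw : ‖w‖ < r) :
    DifferentiableOn ℂ (fun z => hartogsSeries f r (z, w)) U := by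
  intro z hz
  obtain ⟨ε, hε, hεU⟩ := nhds_basis_closedBall.mem_iff.mp (hU.mem_nhds hz)
  obtain ⟨M, hM⟩ := exists_norm_hartogsCoeff_le (isCompact_closedBall z ε) hr.le
    (hf.continuousOn.mono (prod_mono hεU subset_rfl))
  have hball : ball z ε ⊆ U := ball_subset_closedBall.trans hεU
  have hgeom : Summable fun n : ℕ => M * (‖w‖ / r) ^ n :=
    (summable_geometric_of_lt_one (by positivity) ((div_lt_one hr).mpr hw)).mul_left M
  have hdiff : DifferentiableOn ℂ (fun x => ∑' n, hartogsCoeff f r n x * w ^ n) (ball z ε) :=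
    differentiableOn_tsum_of_summable_norm hgeom
      (fun n => ((differentiableOn_hartogsCoeff hU hr hf n).mono hball).mul_const _) isOpen_ball
      fun n x hx => by
        rw [norm_mul, norm_pow, div_pow, div_eq_mul_inv, ← inv_pow, mul_comm (‖w‖ ^ n), ← mul_assoc]
        exact mul_le_mul_of_nonneg_right (hM n x (ball_subset_closedBall hx)) (by positivity)
  exact (hdiff.differentiableAt (ball_mem_nhds z hε)).differentiableWithinAt

noncomputable def hartogsDoubleCoeff (f : ℂ × ℂ → ℂ) (r ρ : ℝ) (q : ℕ × ℕ) : ℂ :=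
  (cauchyPowerSeries (hartogsCoeff f r q.2) 0 ρ).coeff q.1

theorem exists_norm_hartogsDoubleCoeff_mul_pow_le {ρ : ℝ} (hρ : 0 < ρ) (hρr : ρ ≤ r)
    (hf : ContinuousOn f (closedBall 0 ρ ×ˢ sphere 0 r)) :
    ∃ M, ∀ q, ‖hartogsDoubleCoeff f r ρ q‖ * ρ ^ (q.1 + q.2) ≤ M := by
  have hr : 0 < r := hρ.trans_le hρr
  obtain ⟨M, hM⟩ := exists_norm_hartogsCoeff_le (isCompact_closedBall 0 ρ) hr.le hf
  have hM₀ : 0 ≤ M := by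
    simpa using (norm_nonneg _).trans (hM 0 0 (mem_closedBall_self hρ.le))
  refine ⟨M, fun q => ?_⟩
  have hcq : ‖hartogsDoubleCoeff f r ρ q‖ ≤ M * r⁻¹ ^ q.2 * |ρ|⁻¹ ^ q.1 :=
    norm_coeff_cauchyPowerSeries_le
      (fun z hz => hM q.2 z (sphere_subset_closedBall (by rwa [abs_of_pos hρ] at hz))) q.1
  rw [abs_of_pos hρ] at hcq
  calc ‖hartogsDoubleCoeff f r ρ q‖ * ρ ^ (q.1 + q.2)
      ≤ M * r⁻¹ ^ q.2 * ρ⁻¹ ^ q.1 * ρ ^ (q.1 + q.2) := by gcongr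
    _ = M * (ρ⁻¹ * ρ) ^ q.1 * (ρ * r⁻¹) ^ q.2 := by ring
    _ = M * (ρ / r) ^ q.2 := by rw [inv_mul_cancel₀ hρ.ne', one_pow, mul_one, div_eq_mul_inv]
    _ ≤ M := mul_le_of_le_one_right hM₀ (pow_le_one₀ (by positivity) ((div_le_one hr).mpr hρr))

theorem eqOn_doubleSum_hartogsSeries (hU : IsOpen U) (hr : 0 < r)
    (hf : AnalyticOnNhd ℂ f (U ×ˢ sphere 0 r)) {ρ M : ℝ} (hρ : 0 < ρ) (hρU : closedBall 0 ρ ⊆ U)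
    (hc : ∀ q, ‖hartogsDoubleCoeff f r ρ q‖ * ρ ^ (q.1 + q.2) ≤ M) :
    EqOn (doubleSum (hartogsDoubleCoeff f r ρ)) (hartogsSeries f r) (ball 0 ρ) := by
  intro y hy
  rw [mem_ball_zero_iff] at hy
  have hfiber (n : ℕ) : HasSum (fun m => hartogsDoubleCoeff f r ρ (m, n) * y.1 ^ m * y.2 ^ n)
      (hartogsCoeff f r n y.1 * y.2 ^ n) := by
    have := hasSum_coeff_cauchyPowerSeries hρ
      ((differentiableOn_hartogsCoeff hU hr hf n).mono hρU) ((norm_fst_le y).trans_lt hy)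
    simpa only [hartogsDoubleCoeff, smul_eq_mul, mul_comm (y.1 ^ _)] using this.mul_right (y.2 ^ n)
  have hsum := (Equiv.prodComm ℕ ℕ).hasSum_iff.mpr (summable_doubleSum hc hy).hasSum
  exact (hsum.prod_fiberwise hfiber).tsum_eq.symm

theorem analyticOnNhd_hartogsSeries (hU : IsOpen U) (hf : AnalyticOnNhd ℂ f (U ×ˢ sphere 0 r))
    {ρ : ℝ} (hρ : 0 < ρ) (hρr : ρ ≤ r) (hρU : closedBall 0 ρ ⊆ U) :
    AnalyticOnNhd ℂ (hartogsSeries f r) (ball 0 (ρ / 2)) := by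
  obtain ⟨M, hc⟩ := exists_norm_hartogsDoubleCoeff_mul_pow_le hρ hρr
    (hf.continuousOn.mono (prod_mono hρU subset_rfl))
  have heq := eqOn_doubleSum_hartogsSeries hU (hρ.trans_le hρr) hf hρ hρU hc
  lift ρ to ℝ≥0 using hρ.le
  have hps := (hasFPowerSeriesOnBall_doubleSum (by exact_mod_cast hρ) hc).congr
    (heq.mono (by rw [eball_coe]; exact ball_subset_ball (by simp)))
  intro y hy
  exact hps.analyticAt_of_mem (by rwa [eball_coe, NNReal.coe_div, NNReal.coe_ofNat])

end Hartogs

theorem AnalyticOnNhd.piecewise_union {𝕜 E F : Type*} [NontriviallyNormedField 𝕜]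
    [NormedAddCommGroup E] [NormedSpace 𝕜 E] [NormedAddCommGroup F] [NormedSpace 𝕜 F]
    {s t : Set E} [∀ x, Decidable (x ∈ s)] {f g : E → F} (hs : IsOpen s) (ht : IsOpen t)
    (hf : AnalyticOnNhd 𝕜 f s) (hg : AnalyticOnNhd 𝕜 g t) (hfg : EqOn f g (s ∩ t)) :
    AnalyticOnNhd 𝕜 (s.piecewise f g) (s ∪ t) := by
  rintro x (hx | hx)
  · refine (hf x hx).congr ?_
    filter_upwards [hs.mem_nhds hx] with y hy
    exact (piecewise_eq_of_mem s f g hy).symm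
  · refine (hg x hx).congr ?_
    filter_upwards [ht.mem_nhds hx] with y hy
    by_cases hys : y ∈ s
    · rw [piecewise_eq_of_mem s f g hys, hfg ⟨hys, hy⟩]
    · exact (piecewise_eq_of_notMem s f g hys).symm

def leviDomain : Set (ℂ × ℂ) :=
  {p | ‖p.1‖ < 1 ∧ ‖p.2‖ < 1 ∧ p.1.re < ‖p.2‖ ^ 2}

def leviBase : Set ℂ :=
  {z | ‖z‖ < 1 ∧ z.re < 1 / 2}

theorem isOpen_leviDomain : IsOpen leviDomain :=
  (isOpen_lt (continuous_norm.comp continuous_fst) continuous_const).inter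
    ((isOpen_lt (continuous_norm.comp continuous_snd) continuous_const).inter
      (isOpen_lt (continuous_re.comp continuous_fst) ((continuous_norm.comp continuous_snd).pow 2)))

theorem isOpen_leviBase : IsOpen leviBase :=
  (isOpen_lt continuous_norm continuous_const).inter (isOpen_lt continuous_re continuous_const)

theorem leviBase_prod_sphere_subset : leviBase ×ˢ sphere (0 : ℂ) (3 / 4) ⊆ leviDomain := by
  rintro ⟨z, w⟩ ⟨⟨hz, hre⟩, hw⟩
  rw [mem_sphere_zero_iff_norm] at hw
  exact ⟨hz, by rw [hw]; norm_num, by rw [hw]; linarith⟩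

theorem closedBall_subset_leviBase : closedBall (0 : ℂ) (1 / 4) ⊆ leviBase := by
  intro z hz
  rw [mem_closedBall_zero_iff] at hz
  exact ⟨by linarith, by linarith [re_le_norm z]⟩

section LeviExtension

variable {f : ℂ × ℂ → ℂ}

theorem hartogsSeries_eq_of_re_neg (hf : AnalyticOnNhd ℂ f leviDomain) {z w : ℂ} (hz : ‖z‖ < 1)
    (hre : z.re < 0) (hw : ‖w‖ < 3 / 4) : hartogsSeries f (3 / 4) (z, w) = f (z, w) := by
  refine (hasSum_hartogsCoeff (by norm_num) (fun w' hw' => ?_) hw).tsum_eq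
  rw [mem_closedBall_zero_iff] at hw'
  have hmem : (z, w') ∈ leviDomain :=
    ⟨hz, by linarith, hre.trans_le (by positivity)⟩
  exact ((hf _ hmem).comp₂ analyticAt_const analyticAt_id).differentiableAt.differentiableWithinAt

theorem hartogsSeries_eq (hf : AnalyticOnNhd ℂ f leviDomain) {p : ℂ × ℂ} (hp : p ∈ leviDomain)
    (hp₂ : ‖p.2‖ < 1 / 2) : hartogsSeries f (3 / 4) p = f p := by
  obtain ⟨z, w⟩ := p
  have hw : ‖w‖ < 1 / 2 := hp₂
  have hw₂ : ‖w‖ ^ 2 < 1 / 4 := by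
    nlinarith [norm_nonneg w]
  set S : Set ℂ := ball 0 1 ∩ {x | x.re < ‖w‖ ^ 2}
  have hS : ∀ x ∈ S, (x, w) ∈ leviDomain := fun x ⟨hx, hre⟩ =>
    ⟨mem_ball_zero_iff.mp hx, by linarith, hre⟩
  have hSbase : S ⊆ leviBase := fun x ⟨hx, hre⟩ =>
    ⟨mem_ball_zero_iff.mp hx, hre.trans (by linarith)⟩
  have hG : AnalyticOnNhd ℂ (fun x => hartogsSeries f (3 / 4) (x, w)) S :=
    ((differentiableOn_hartogsSeries_slice isOpen_leviBase (by norm_num)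
      (hf.mono leviBase_prod_sphere_subset) (by linarith)).analyticOnNhd
      isOpen_leviBase).mono hSbase
  have hF : AnalyticOnNhd ℂ (fun x => f (x, w)) S := fun x hx =>
    (hf _ (hS x hx)).comp₂ analyticAt_id analyticAt_const
  have hleft : ball (0 : ℂ) 1 ∩ {x | x.re < 0} ∈ 𝓝 (-1 / 2 : ℂ) :=
    (isOpen_ball.inter (isOpen_lt continuous_re continuous_const)).mem_nhds
      ⟨by simp; norm_num, by simp; norm_num⟩
  have heq : (fun x => hartogsSeries f (3 / 4) (x, w)) =ᶠ[𝓝 (-1 / 2 : ℂ)] fun x => f (x, w) := by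
    filter_upwards [hleft] with x ⟨hx, hre⟩
    exact hartogsSeries_eq_of_re_neg hf (mem_ball_zero_iff.mp hx) hre (by linarith)
  exact hG.eqOn_of_preconnected_of_eventuallyEq hF
    ((convex_ball 0 1).inter (convex_halfSpace_re_lt _)).isPreconnected
    ⟨by simp; norm_num, by norm_num; linarith [sq_nonneg ‖w‖]⟩ heq
    ⟨mem_ball_zero_iff.mpr hp.1, hp.2.2⟩

end LeviExtension

/-- **Local Levi extension at a strictly pseudoconvex boundary point (concave side).**
Let `Ω = {(z₁, z₂) : |z₁| < 1, |z₂| < 1, Re z₁ < |z₂|²}`. There is an open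
neighborhood `V` of the origin such that every function holomorphic on `Ω` extends
holomorphically to `Ω ∪ V`. -/
theorem levi_extension :
    ∃ V : Set (ℂ × ℂ), IsOpen V ∧ (0 : ℂ × ℂ) ∈ V ∧
      ∀ f : ℂ × ℂ → ℂ,
        AnalyticOn ℂ f
          {p : ℂ × ℂ | ‖p.1‖ < 1 ∧ ‖p.2‖ < 1 ∧
            p.1.re < ‖p.2‖ ^ 2} →
        ∃ g : ℂ × ℂ → ℂ,
          AnalyticOn ℂ g
            ({p : ℂ × ℂ | ‖p.1‖ < 1 ∧ ‖p.2‖ < 1 ∧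
              p.1.re < ‖p.2‖ ^ 2} ∪ V) ∧
          Set.EqOn g f
            {p : ℂ × ℂ | ‖p.1‖ < 1 ∧ ‖p.2‖ < 1 ∧
              p.1.re < ‖p.2‖ ^ 2} := by
  classical
  refine ⟨ball 0 (1 / 8), isOpen_ball, mem_ball_self (by norm_num), fun f hf => ?_⟩
  replace hf : AnalyticOnNhd ℂ f leviDomain := isOpen_leviDomain.analyticOn_iff_analyticOnNhd.mp hf
  have hG : AnalyticOnNhd ℂ (hartogsSeries f (3 / 4)) (ball 0 (1 / 8)) := by
    convert analyticOnNhd_hartogsSeries isOpen_leviBase (hf.mono leviBase_prod_sphere_subset)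
      (by norm_num) (by norm_num) closedBall_subset_leviBase using 2
    norm_num
  have hagree : EqOn f (hartogsSeries f (3 / 4)) (leviDomain ∩ ball 0 (1 / 8)) :=
    fun p ⟨hp, hpV⟩ => (hartogsSeries_eq hf hp
      ((norm_snd_le p).trans_lt ((mem_ball_zero_iff.mp hpV).trans (by norm_num)))).symm
  exact ⟨leviDomain.piecewise f (hartogsSeries f (3 / 4)),
    (AnalyticOnNhd.piecewise_union isOpen_leviDomain isOpen_ball hf hG hagree).analyticOn,
    piecewise_eqOn _ _ _⟩
end

section
/- Let D ⊆ ℂ be an open set and let (z_k) be a sequence of points of D that has no accumulation point in D (i.e., the sequence is divergent in D). Then there exists a function f : ℂ → ℂ analytic on D such that the sequence (|f(z_k)|) is unbounded. -/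
/-! An unbounded sequence is already unbounded under the identity. A bounded one has, by
compactness of closed discs, a cluster point `p`; it lies outside `D`, so `w ↦ (w - p)⁻¹` is
holomorphic on `D`, and it blows up along the terms of the sequence that approach `p`. -/

open Filter Set

theorem exists_mapClusterPt_of_bddAbove_norm {E ι : Type*} [SeminormedAddCommGroup E]
    [ProperSpace E] {l : Filter ι} [l.NeBot] {u : ι → E}
    (hu : BddAbove (range fun i => ‖u i‖)) : ∃ p, MapClusterPt p l u := by
  obtain ⟨C, hC⟩ := hu
  have hmaps : Tendsto u l (𝓟 (Metric.closedBall 0 C)) :=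
    tendsto_principal.2 <| Eventually.of_forall fun i => mem_closedBall_zero_iff.2 (hC ⟨i, rfl⟩)
  obtain ⟨p, -, hp⟩ := (isCompact_closedBall (0 : E) C).exists_mapClusterPt hmaps
  exact ⟨p, hp⟩

theorem MapClusterPt.not_bddAbove_norm_inv_sub {𝕜 ι : Type*} [NormedField 𝕜] {l : Filter ι}
    {u : ι → 𝕜} {p : 𝕜} (hp : MapClusterPt p l u) (hne : ∀ i, u i ≠ p) :
    ¬ BddAbove (range fun i => ‖(u i - p)⁻¹‖) := by
  rintro ⟨C, hC⟩
  have hbound : ∀ i, ‖(u i - p)⁻¹‖ ≤ C := fun i => hC ⟨i, rfl⟩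
  have hball : Metric.ball p (|C| + 1)⁻¹ ∈ nhds p := Metric.ball_mem_nhds p (by positivity)
  obtain ⟨i, hi⟩ := (hp.frequently hball).exists
  have hpos : 0 < ‖u i - p‖ := norm_pos_iff.2 (sub_ne_zero.2 (hne i))
  have hnear : ‖u i - p‖ < (|C| + 1)⁻¹ := by rw [← dist_eq_norm]; exact hi
  have hfar : |C| + 1 < ‖(u i - p)⁻¹‖ := by
    rw [norm_inv]
    exact (lt_inv_comm₀ hpos (by positivity)).1 hnear
  linarith [hbound i, le_abs_self C]

theorem plane_domain_holomorphically_convex_general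
    {D : Set ℂ} (z : ℕ → ℂ) (hz : ∀ k, z k ∈ D)
    (hdiv : ∀ p ∈ D, ¬ MapClusterPt p Filter.atTop z) :
    ∃ f : ℂ → ℂ, AnalyticOn ℂ f D ∧
      ¬ BddAbove (Set.range fun k => ‖f (z k)‖) := by
  by_cases hbdd : BddAbove (range fun k => ‖z k‖)
  · obtain ⟨p, hp⟩ := exists_mapClusterPt_of_bddAbove_norm (l := atTop) hbdd
    have hpD : p ∉ D := fun hpD => hdiv p hpD hp
    have hne : ∀ k, z k ≠ p := fun k hk => hpD (hk ▸ hz k)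
    have hanalytic : AnalyticOnNhd ℂ (fun w => (w - p)⁻¹) D :=
      (analyticOnNhd_id.sub analyticOnNhd_const).inv fun w hw =>
        sub_ne_zero.2 (ne_of_mem_of_not_mem hw hpD)
    exact ⟨fun w => (w - p)⁻¹, hanalytic.analyticOn, hp.not_bddAbove_norm_inv_sub hne⟩
  · exact ⟨id, analyticOn_id, hbdd⟩

/-- **Holomorphic convexity of plane domains.** Every open set `D ⊆ ℂ` is
holomorphically convex: for every sequence `(z k)` in `D` with no accumulation
point in `D` there is a holomorphic function `f` on `D` with `(|f (z k)|)`
unbounded. In particular every domain in `ℂ` is a domain of holomorphy. -/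
theorem plane_domain_holomorphically_convex
    {D : Set ℂ} (hD : IsOpen D) (z : ℕ → ℂ) (hz : ∀ k, z k ∈ D)
    (hdiv : ∀ p ∈ D, ¬ MapClusterPt p Filter.atTop z) :
    ∃ f : ℂ → ℂ, AnalyticOn ℂ f D ∧
      ¬ BddAbove (Set.range fun k => ‖f (z k)‖) :=
  plane_domain_holomorphically_convex_general z hz hdiv
end
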